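/- For every n ≥ 4, the total number of spanning rooted forests of the T-caterpillar T_n equals 4·F(2n−3). -/

import Mathlib

/-- A spanning rooted forest of a graph `G`: a spanning acyclic subgraph (given by its
edge set) together with a set of roots containing exactly one root in each tree
(connected component). -/
structure RootedForest {V : Type*} (G : SimpleGraph V) where
  edges : Set (Sym2 V)
  roots : Set V
  edges_sub : edges ⊆ G.edgeSet
  acyclic : (SimpleGraph.fromEdgeSet edges).IsAcyclic
  unique_root : ∀ v : V, ∃! r, r ∈ roots ∧ (SimpleGraph.fromEdgeSet edges).Reachable v r

/-- The T-caterpillar `T_n` on vertices `{0, …, n-1}` (0-indexed version of `{1, …, n}`):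
edges (0,2), (1,2), and (i, i+1) for 2 ≤ i ≤ n-2. -/
def tCaterpillar (n : ℕ) : SimpleGraph (Fin n) :=
  SimpleGraph.fromRel fun i j =>
    (i.val = 0 ∧ j.val = 2) ∨ (i.val = 1 ∧ j.val = 2) ∨ (2 ≤ i.val ∧ j.val = i.val + 1)

/-!
On an acyclic graph, a spanning rooted forest is the same thing as a parent map: every vertex is
either a root or points to a neighbour, and no two vertices point to each other. Longer cycles of
pointers cannot occur because the graph has no cycles, so following pointers always ends in a
root; the forest consists of the edges `{v, parent v}`, and conversely the parent of a non-root
is the next vertex on its path to its root.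

For `n ≥ 3`, `T_{n+1}` is `T_n` with a new leaf `u` attached to the last vertex `w`. A parent map
of `T_{n+1}` is a parent map of `T_n` together with the state of the edge `uw`: unused, `u → w`,
or `w → u`; the last state requires `w` to be a root. If `a_n` counts the parent maps of `T_n`
and `r_n` those in which the last vertex is a root, then
`a_{n+1} = r_{n+1} + a_n` and `r_{n+1} = a_n + r_n`. Since `a_3 = 8 = 4 F(3)` and
`r_3 = 4 = 4 F(2)`, induction gives `a_n = 4 F(2n-3)` and `r_n = 4 F(2n-4)`.
-/

namespace SimpleGraph

variable {V : Type*} {G : SimpleGraph V}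

theorem isAcyclic_of_rank (f : V → ℕ) (hne : ∀ a b, G.Adj a b → f a ≠ f b)
    (hlower : ∀ a b c, G.Adj a b → G.Adj a c → f b < f a → f c < f a → b = c) :
    G.IsAcyclic := by
  classical
  intro v c hc
  obtain ⟨m, hm, hmax⟩ := c.support.toFinset.exists_max_image f ⟨v, by simp⟩
  rw [List.mem_toFinset] at hm
  have hc' := hc.rotate hm
  have hnil := hc'.not_nil
  have lt_of_adj {x : V} (hx : G.Adj m x) (hxc : x ∈ (c.rotate m hm).support) : f x < f m :=
    (hmax x (by simpa using hxc)).lt_of_ne (hne _ _ hx).symm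
  exact hc'.snd_ne_penultimate <|
    hlower m _ _ (Walk.adj_snd hnil) (Walk.adj_penultimate hnil).symm
      (lt_of_adj (Walk.adj_snd hnil) (Walk.getVert_mem_support _ 1))
      (lt_of_adj (Walk.adj_penultimate hnil).symm (Walk.getVert_mem_support _ _))

/-- `p v = some w` makes `w` the parent of `v`; the vertices with `p v = none` are the roots. -/
def IsParentMap (G : SimpleGraph V) (p : V → Option V) : Prop :=
  (∀ v w, p v = some w → G.Adj v w) ∧ ∀ v w, p v = some w → p w ≠ some v

def parentMaps (G : SimpleGraph V) : Set (V → Option V) := {p | G.IsParentMap p}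

def parentMapsWithRoot (G : SimpleGraph V) (v : V) : Set (V → Option V) :=
  {p ∈ G.parentMaps | p v = none}

instance [Fintype V] [DecidableEq V] [DecidableRel G.Adj] : DecidablePred (· ∈ G.parentMaps) :=
  fun _ => inferInstanceAs (Decidable (_ ∧ _))

instance [Fintype V] [DecidableEq V] [DecidableRel G.Adj] (v : V) :
    DecidablePred (· ∈ G.parentMapsWithRoot v) :=
  fun _ => inferInstanceAs (Decidable (_ ∧ _))

def parentEdges (p : V → Option V) : Set (Sym2 V) := {e | ∃ v w, p v = some w ∧ e = s(v, w)}

lemma eq_some_snd_of_isPath {H : SimpleGraph V} {p : V → Option V}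
    (hH : ∀ a b, H.Adj a b → p a = some b ∨ p b = some a) {v r : V} {P : H.Walk v r}
    (hP : P.IsPath) (hr : p r = none) (hnil : ¬P.Nil) : p v = some P.snd := by
  induction P with
  | nil => exact absurd Walk.Nil.nil hnil
  | @cons v w r hvw Q ih =>
    rw [Walk.snd_cons]
    rw [Walk.cons_isPath_iff] at hP
    refine (hH v w hvw).resolve_right fun hwv => ?_
    by_cases hQ : Q.Nil
    · rw [hQ.eq, hr] at hwv
      cases hwv
    · have hsnd := (ih hP.1 hr hQ).symm.trans hwv
      exact hP.2 (Option.some_inj.mp hsnd ▸ Q.getVert_mem_support 1)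

namespace IsParentMap

variable {p : V → Option V}

lemma parentEdges_subset (hp : G.IsParentMap p) : parentEdges p ⊆ G.edgeSet := by
  rintro _ ⟨v, w, hvw, rfl⟩
  exact hp.1 v w hvw

lemma fromEdgeSet_le (hp : G.IsParentMap p) : fromEdgeSet (parentEdges p) ≤ G :=
  (fromEdgeSet_mono hp.parentEdges_subset).trans (fromEdgeSet_edgeSet G).le

lemma fromEdgeSet_parentEdges_adj (hp : G.IsParentMap p) {a b : V} :
    (fromEdgeSet (parentEdges p)).Adj a b ↔ p a = some b ∨ p b = some a := by
  rw [SimpleGraph.fromEdgeSet_adj]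
  constructor
  · rintro ⟨⟨v, w, hvw, he⟩, -⟩
    rcases Sym2.eq_iff.mp he with ⟨rfl, rfl⟩ | ⟨rfl, rfl⟩
    exacts [Or.inl hvw, Or.inr hvw]
  · rintro (h | h)
    · exact ⟨⟨a, b, h, rfl⟩, (hp.1 a b h).ne⟩
    · exact ⟨⟨b, a, h, Sym2.eq_swap⟩, (hp.1 b a h).ne'⟩

lemma exists_root_reachable_or_isPath (hp : G.IsParentMap p) (hG : G.IsAcyclic) (k : ℕ)
    (v : V) :
    (∃ r, p r = none ∧ (fromEdgeSet (parentEdges p)).Reachable v r) ∨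
      ∃ (u : V) (Q : (fromEdgeSet (parentEdges p)).Walk v u),
        Q.IsPath ∧ Q.length = k ∧ (¬Q.Nil → p v = some Q.snd) := by
  induction k generalizing v with
  | zero => exact Or.inr ⟨v, .nil, .nil, rfl, fun h => absurd .nil h⟩
  | succ k ih =>
    obtain hv | ⟨w, hvw⟩ := Option.eq_none_or_eq_some (p v)
    · exact Or.inl ⟨v, hv, .rfl⟩
    have hadj : (fromEdgeSet (parentEdges p)).Adj v w :=
      hp.fromEdgeSet_parentEdges_adj.mpr (Or.inl hvw)
    obtain ⟨r, hr, hwr⟩ | ⟨u, Q, hQ, hlen, hsnd⟩ := ih w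
    · exact Or.inl ⟨r, hr, hadj.reachable.trans hwr⟩
    refine Or.inr ⟨u, .cons hadj Q, hQ.cons fun hvQ => ?_, by simp [hlen],
      fun _ => by rwa [Walk.snd_cons]⟩
    -- in a forest, a path from `w` through the neighbour `v` must go to `v` first
    have hv := (hG.anti hp.fromEdgeSet_le).eq_snd_of_adj_start hQ hadj.symm hvQ
    by_cases hQnil : Q.Nil
    · cases hQnil
      exact hadj.ne hv
    · exact hp.2 v w hvw (hv ▸ hsnd hQnil)

lemma exists_root_reachable [Finite V] (hp : G.IsParentMap p) (hG : G.IsAcyclic) (v : V) :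
    ∃ r, p r = none ∧ (fromEdgeSet (parentEdges p)).Reachable v r := by
  have := Fintype.ofFinite V
  refine (hp.exists_root_reachable_or_isPath hG (Fintype.card V) v).resolve_right ?_
  rintro ⟨u, Q, hQ, hlen, -⟩
  exact hQ.length_lt.ne hlen

def toRootedForest [Finite V] (hp : G.IsParentMap p) (hG : G.IsAcyclic) : RootedForest G where
  edges := parentEdges p
  roots := {v | p v = none}
  edges_sub := hp.parentEdges_subset
  acyclic := hG.anti hp.fromEdgeSet_le
  unique_root v := by
    obtain ⟨r, hr, hvr⟩ := hp.exists_root_reachable hG v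
    refine ⟨r, ⟨hr, hvr⟩, fun r' ⟨hr', hvr'⟩ => ?_⟩
    obtain ⟨P, hP⟩ := (hvr'.symm.trans hvr).exists_isPath
    by_contra hne
    have := eq_some_snd_of_isPath (fun _ _ => hp.fromEdgeSet_parentEdges_adj.mp) hP hr
      fun hnil => hne hnil.eq
    exact Option.some_ne_none _ (this.symm.trans hr')

end IsParentMap

end SimpleGraph

namespace RootedForest

open SimpleGraph

variable {V : Type*} {G : SimpleGraph V}

lemma ext {R S : RootedForest G} (he : R.edges = S.edges) (hr : R.roots = S.roots) : R = S := by
  cases R; cases S; cases he; cases hr; rfl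

variable (R : RootedForest G)

lemma fromEdgeSet_le : fromEdgeSet R.edges ≤ G :=
  (fromEdgeSet_mono R.edges_sub).trans (fromEdgeSet_edgeSet G).le

lemma eq_of_reachable {r r' : V} (hr : r ∈ R.roots) (hr' : r' ∈ R.roots)
    (h : (fromEdgeSet R.edges).Reachable r r') : r = r' :=
  (R.unique_root r).unique ⟨hr, .rfl⟩ ⟨hr', h⟩

noncomputable def root (v : V) : V := (R.unique_root v).exists.choose

lemma root_mem (v : V) : R.root v ∈ R.roots := (R.unique_root v).exists.choose_spec.1

lemma reachable_root (v : V) : (fromEdgeSet R.edges).Reachable v (R.root v) :=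
  (R.unique_root v).exists.choose_spec.2

lemma eq_root {v r : V} (hr : r ∈ R.roots) (hvr : (fromEdgeSet R.edges).Reachable v r) :
    r = R.root v :=
  (R.unique_root v).unique ⟨hr, hvr⟩ ⟨R.root_mem v, R.reachable_root v⟩

open scoped Classical in
noncomputable def parent (v : V) : Option V :=
  if v ∈ R.roots then none else some (R.reachable_root v).exists_isPath.choose.snd

lemma parent_eq_none_iff {v : V} : R.parent v = none ↔ v ∈ R.roots := by
  unfold parent; split_ifs <;> simpa

lemma parent_eq_snd {v r : V} {P : (fromEdgeSet R.edges).Walk v r} (hP : P.IsPath)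
    (hr : r ∈ R.roots) (hv : v ∉ R.roots) : R.parent v = some P.snd := by
  obtain rfl := R.eq_root hr P.reachable
  have hspec := (R.reachable_root v).exists_isPath.choose_spec
  rw [parent, if_neg hv,
    Subtype.mk.inj <| R.acyclic.subsingleton_path _ _ |>.elim ⟨_, hspec⟩ ⟨P, hP⟩]

lemma exists_parent_eq_snd {v : V} (hv : v ∉ R.roots) :
    ∃ P : (fromEdgeSet R.edges).Walk v (R.root v), P.IsPath ∧ ¬P.Nil ∧
      R.parent v = some P.snd := by
  obtain ⟨P, hP⟩ := (R.reachable_root v).exists_isPath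
  exact ⟨P, hP, fun hnil => hv (hnil.eq ▸ R.root_mem v), R.parent_eq_snd hP (R.root_mem v) hv⟩

lemma isParentMap_parent : G.IsParentMap R.parent := by
  refine ⟨fun v w hvw => ?_, fun v w hvw hwv => ?_⟩
  · have hv : v ∉ R.roots := by simp [← R.parent_eq_none_iff, hvw]
    obtain ⟨P, -, hnil, hP⟩ := R.exists_parent_eq_snd hv
    obtain rfl := Option.some_inj.mp (hvw.symm.trans hP)
    exact R.fromEdgeSet_le (P.adj_snd hnil)
  · have hv : v ∉ R.roots := by simp [← R.parent_eq_none_iff, hvw]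
    have hw : w ∉ R.roots := by simp [← R.parent_eq_none_iff, hwv]
    obtain ⟨P, hP, hnil, hPv⟩ := R.exists_parent_eq_snd hv
    obtain rfl := Option.some_inj.mp (hvw.symm.trans hPv)
    have hsnd := hwv.symm.trans (R.parent_eq_snd hP.tail (R.root_mem v) hw)
    rw [← P.cons_tail_eq hnil, Walk.cons_isPath_iff] at hP
    have hmem : P.tail.snd ∈ P.tail.support := P.tail.getVert_mem_support 1
    rw [← Option.some_inj.mp hsnd] at hmem
    exact hP.2 hmem

lemma parentEdges_parent : parentEdges R.parent = R.edges := by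
  ext e
  refine ⟨?_, fun he => ?_⟩
  · rintro ⟨v, w, hvw, rfl⟩
    have hv : v ∉ R.roots := by simp [← R.parent_eq_none_iff, hvw]
    obtain ⟨P, -, hnil, hP⟩ := R.exists_parent_eq_snd hv
    obtain rfl := Option.some_inj.mp (hvw.symm.trans hP)
    exact ((fromEdgeSet_adj _).mp (P.adj_snd hnil)).1
  induction e using Sym2.ind with | _ a b => ?_
  have hab : (fromEdgeSet R.edges).Adj a b :=
    (fromEdgeSet_adj _).mpr ⟨he, (R.edges_sub he : G.Adj a b).ne⟩
  obtain ⟨r, hr, P, hP⟩ : ∃ r ∈ R.roots, ∃ P : (fromEdgeSet R.edges).Walk a r, P.IsPath :=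
    ⟨_, R.root_mem a, (R.reachable_root a).exists_isPath⟩
  by_cases hb : b ∈ P.support
  · have ha : a ∉ R.roots := fun ha => by
      obtain rfl := R.eq_of_reachable ha hr P.reachable
      cases Walk.isPath_iff_nil.mp hP
      rw [Walk.support_nil, List.mem_singleton] at hb
      exact hab.ne hb.symm
    exact ⟨a, b, (R.parent_eq_snd hP hr ha).trans
      (congrArg some (R.acyclic.eq_snd_of_adj_start hP hab hb).symm), rfl⟩
  · have hQ : (Walk.cons hab.symm P).IsPath := hP.cons hb
    have hb' : b ∉ R.roots := fun hb' =>
      hb (R.eq_of_reachable hb' hr (Walk.cons hab.symm P).reachable ▸ P.end_mem_support)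
    exact ⟨b, a, by simpa using R.parent_eq_snd hQ hr hb', Sym2.eq_swap⟩

end RootedForest

namespace SimpleGraph

variable {V : Type*} {G : SimpleGraph V}

lemma IsParentMap.parent_toRootedForest [Finite V] {p : V → Option V} (hp : G.IsParentMap p)
    (hG : G.IsAcyclic) : (hp.toRootedForest hG).parent = p := by
  funext v
  obtain hv | ⟨w, hvw⟩ := Option.eq_none_or_eq_some (p v)
  · exact hv ▸ (hp.toRootedForest hG).parent_eq_none_iff.mpr hv
  have hv : v ∉ (hp.toRootedForest hG).roots := fun h => by simp_all [toRootedForest]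
  obtain ⟨P, hP, hnil, hPv⟩ := (hp.toRootedForest hG).exists_parent_eq_snd hv
  rw [hPv]
  exact (eq_some_snd_of_isPath (fun _ _ => hp.fromEdgeSet_parentEdges_adj.mp) hP
    ((hp.toRootedForest hG).root_mem v) hnil).symm

noncomputable def IsAcyclic.rootedForestEquiv [Finite V] (hG : G.IsAcyclic) :
    RootedForest G ≃ G.parentMaps where
  toFun R := ⟨R.parent, R.isParentMap_parent⟩
  invFun p := p.2.toRootedForest hG
  left_inv R := RootedForest.ext R.parentEdges_parent (Set.ext fun _ => R.parent_eq_none_iff)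
  right_inv p := Subtype.ext (p.2.parent_toRootedForest hG)

section Iso

variable {V' : Type*} {G' : SimpleGraph V'}

lemma Iso.isParentMap_arrowCongr_iff (e : G ≃g G') {p : V → Option V} :
    G'.IsParentMap (e.toEquiv.arrowCongr e.toEquiv.optionCongr p) ↔ G.IsParentMap p := by
  have key (v w : V) :
      e.toEquiv.arrowCongr e.toEquiv.optionCongr p (e v) = some (e w) ↔ p v = some w := by
    simp [Equiv.arrowCongr_apply, show e.toEquiv.symm (e v) = v from e.toEquiv.left_inv v]
  refine ⟨fun ⟨h1, h2⟩ => ⟨fun v w h => ?_, fun v w h h' => ?_⟩,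
    fun ⟨h1, h2⟩ => ⟨fun v' w' h => ?_, fun v' w' h h' => ?_⟩⟩
  · exact e.map_adj_iff.mp (h1 _ _ ((key v w).mpr h))
  · exact h2 _ _ ((key v w).mpr h) ((key w v).mpr h')
  all_goals
    obtain ⟨v, rfl⟩ := e.surjective v'
    obtain ⟨w, rfl⟩ := e.surjective w'
  · exact e.map_adj_iff.mpr (h1 _ _ ((key v w).mp h))
  · exact h2 _ _ ((key v w).mp h) ((key w v).mp h')

theorem Iso.ncard_parentMaps (e : G ≃g G') : G.parentMaps.ncard = G'.parentMaps.ncard := by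
  rw [← Nat.card_coe_set_eq, ← Nat.card_coe_set_eq]
  exact Nat.card_congr <| (e.toEquiv.arrowCongr e.toEquiv.optionCongr).subtypeEquiv
    fun _ => e.isParentMap_arrowCongr_iff.symm

theorem Iso.ncard_parentMapsWithRoot (e : G ≃g G') (v : V) :
    (G.parentMapsWithRoot v).ncard = (G'.parentMapsWithRoot (e v)).ncard := by
  rw [← Nat.card_coe_set_eq, ← Nat.card_coe_set_eq]
  refine Nat.card_congr <| (e.toEquiv.arrowCongr e.toEquiv.optionCongr).subtypeEquiv
    fun p => and_congr e.isParentMap_arrowCongr_iff.symm ?_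
  simp [show e.toEquiv.symm (e v) = v from e.toEquiv.left_inv v]

end Iso

def addPendant (G : SimpleGraph V) (v : V) : SimpleGraph (Option V) where
  Adj
    | some a, some b => G.Adj a b
    | none, some b => b = v
    | some a, none => a = v
    | none, none => False
  symm := ⟨by rintro (_ | a) (_ | b) h <;> first | exact h | exact h.symm⟩
  loopless := ⟨by rintro (_ | a) h; exacts [h, G.loopless.irrefl a h]⟩

section Pendant

variable {v : V}

@[simp] lemma addPendant_adj_some_some {a b : V} :
    (G.addPendant v).Adj (some a) (some b) ↔ G.Adj a b := Iff.rfl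

@[simp] lemma addPendant_adj_none_some {b : V} : (G.addPendant v).Adj none (some b) ↔ b = v :=
  Iff.rfl

@[simp] lemma addPendant_adj_some_none {a : V} : (G.addPendant v).Adj (some a) none ↔ a = v :=
  Iff.rfl

@[simp] lemma addPendant_not_adj_none_none : ¬(G.addPendant v).Adj none none := id

def restrictPendant (q : Option V → Option (Option V)) (a : V) : Option V := (q (some a)).join

def extendPendant (p : V → Option V) (o : Option (Option V)) (x : Option V) : Option (Option V) :=
  x.elim o fun a => (p a).map some

lemma restrictPendant_extendPendant (p : V → Option V) (o : Option (Option V)) :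
    restrictPendant (extendPendant p o) = p := by
  funext a
  cases h : p a <;> simp [restrictPendant, extendPendant, h]

lemma restrictPendant_update_extendPendant [DecidableEq V] {p : V → Option V} (hv : p v = none) :
    restrictPendant (Function.update (extendPendant p none) (some v) (some none)) = p := by
  funext a
  by_cases ha : a = v
  · subst ha; simp [restrictPendant, hv]
  · rw [restrictPendant, Function.update_of_ne (by simpa using ha)]
    exact congrFun (restrictPendant_extendPendant p none) a

lemma map_some_restrictPendant {q : Option V → Option (Option V)} {a : V}
    (h : q (some a) ≠ some none) : (restrictPendant q a).map some = q (some a) := by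
  rcases hq : q (some a) with _ | _ | b <;> simp_all [restrictPendant]

namespace IsParentMap

lemma restrictPendant {q : Option V → Option (Option V)}
    (hq : (G.addPendant v).IsParentMap q) : G.IsParentMap (restrictPendant q) := by
  refine ⟨fun a b h => hq.1 _ _ (Option.join_eq_some_iff.mp h), fun a b h h' => ?_⟩
  exact hq.2 _ _ (Option.join_eq_some_iff.mp h) (Option.join_eq_some_iff.mp h')

lemma extendPendant {p : V → Option V} (hp : G.IsParentMap p) {o : Option (Option V)}
    (ho : o = none ∨ o = some (some v)) :
    (G.addPendant v).IsParentMap (SimpleGraph.extendPendant p o) := by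
  refine ⟨?_, ?_⟩
  · rintro (_ | a) w h
    · rcases ho with rfl | rfl <;> cases h
      rfl
    · obtain ⟨b, hb, rfl⟩ := Option.map_eq_some_iff.mp h
      exact hp.1 a b hb
  · rintro (_ | a) w h
    · rcases ho with rfl | rfl <;> cases h
      simp [SimpleGraph.extendPendant]
    · obtain ⟨b, hb, rfl⟩ := Option.map_eq_some_iff.mp h
      simpa [SimpleGraph.extendPendant] using hp.2 a b hb

lemma update_extendPendant [DecidableEq V] {p : V → Option V} (hp : G.IsParentMap p) :
    (G.addPendant v).IsParentMap
      (Function.update (SimpleGraph.extendPendant p none) (some v) (some none)) := by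
  have hext := hp.extendPendant (v := v) (Or.inl rfl)
  refine ⟨fun x y h => ?_, fun x y h h' => ?_⟩
  · by_cases hx : x = some v
    · subst hx
      obtain rfl : none = y := by simpa using h
      rfl
    · exact hext.1 x y (by rwa [Function.update_of_ne hx] at h)
  · by_cases hx : x = some v
    · subst hx
      obtain rfl : none = y := by simpa using h
      simp [SimpleGraph.extendPendant] at h'
    · rw [Function.update_of_ne hx] at h
      by_cases hy : y = some v
      · subst hy
        obtain rfl : none = x := by simpa using h'
        simp [SimpleGraph.extendPendant] at h
      · exact hext.2 x y h (by rwa [Function.update_of_ne hy] at h')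

lemma eq_of_eq_some_none {q : Option V → Option (Option V)}
    (hq : (G.addPendant v).IsParentMap q) {a : V} (h : q (some a) = some none) : a = v :=
  hq.1 _ _ h

lemma eq_of_none_eq_some {q : Option V → Option (Option V)}
    (hq : (G.addPendant v).IsParentMap q) {y : Option V} (h : q none = some y) : y = some v := by
  rcases y with _ | b
  · exact absurd (hq.1 _ _ h) addPendant_not_adj_none_none
  · exact congrArg some (hq.1 _ _ h)

end IsParentMap

lemma image_extendPendant_some :
    (fun p => extendPendant p (some (some v))) '' G.parentMaps =
      (G.addPendant v).parentMaps \ {q | q none = none} := by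
  ext q
  constructor
  · rintro ⟨p, hp, rfl⟩
    exact ⟨hp.extendPendant (Or.inr rfl), by simp [extendPendant]⟩
  rintro ⟨hq, hnone⟩
  obtain ⟨y, hy⟩ := Option.ne_none_iff_exists'.mp hnone
  obtain rfl := hq.eq_of_none_eq_some hy
  refine ⟨_, hq.restrictPendant, funext fun x => ?_⟩
  rcases x with _ | a
  · exact hy.symm
  · refine map_some_restrictPendant fun ha => ?_
    obtain rfl := hq.eq_of_eq_some_none ha
    exact hq.2 _ _ hy ha

lemma image_extendPendant_none :
    (fun p => extendPendant p none) '' G.parentMaps =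
      (G.addPendant v).parentMapsWithRoot none \ {q | q (some v) = some none} := by
  ext q
  constructor
  · rintro ⟨p, hp, rfl⟩
    exact ⟨⟨hp.extendPendant (Or.inl rfl), rfl⟩, by simp [extendPendant]⟩
  rintro ⟨⟨hq, hnone⟩, hv⟩
  refine ⟨_, hq.restrictPendant, funext fun x => ?_⟩
  rcases x with _ | a
  · exact hnone.symm
  · refine map_some_restrictPendant fun ha => ?_
    obtain rfl := hq.eq_of_eq_some_none ha
    exact hv ha

lemma image_update_extendPendant [DecidableEq V] :
    (fun p => Function.update (extendPendant p none) (some v) (some none)) ''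
        G.parentMapsWithRoot v =
      (G.addPendant v).parentMapsWithRoot none ∩ {q | q (some v) = some none} := by
  ext q
  constructor
  · rintro ⟨p, ⟨hp, -⟩, rfl⟩
    exact ⟨⟨hp.update_extendPendant, by simp [extendPendant]⟩, by simp⟩
  rintro ⟨⟨hq, hnone⟩, hv : q (some v) = some none⟩
  refine ⟨_, ⟨hq.restrictPendant, by simp [restrictPendant, hv]⟩, funext fun x => ?_⟩
  by_cases hx : x = some v
  · subst hx; simpa using hv.symm
  dsimp only
  rw [Function.update_of_ne hx]
  rcases x with _ | a
  · exact hnone.symm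
  · exact map_some_restrictPendant fun ha => hx (congrArg some (hq.eq_of_eq_some_none ha))

theorem ncard_parentMaps_addPendant [Finite V] :
    (G.addPendant v).parentMaps.ncard =
      ((G.addPendant v).parentMapsWithRoot none).ncard + G.parentMaps.ncard := by
  rw [← Set.ncard_inter_add_ncard_sdiff_eq_ncard _ {q | q none = none},
    ← image_extendPendant_some, Set.ncard_image_of_injective _
      (Function.LeftInverse.injective fun p => restrictPendant_extendPendant p _)]
  rfl

theorem ncard_parentMapsWithRoot_addPendant [Finite V] :
    ((G.addPendant v).parentMapsWithRoot none).ncard =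
      G.parentMaps.ncard + (G.parentMapsWithRoot v).ncard := by
  classical
  rw [← Set.ncard_inter_add_ncard_sdiff_eq_ncard _ {q | q (some v) = some none}, add_comm,
    ← image_extendPendant_none, ← image_update_extendPendant, Set.ncard_image_of_injective _
      (Function.LeftInverse.injective fun p => restrictPendant_extendPendant p _),
    Set.InjOn.ncard_image fun p hp p' hp' h => ?_]
  rw [← restrictPendant_update_extendPendant hp.2, h, restrictPendant_update_extendPendant hp'.2]

end Pendant

end SimpleGraph

open SimpleGraph

lemma tCaterpillar_adj {n : ℕ} {a b : Fin n} : (tCaterpillar n).Adj a b ↔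
    (a.val = 0 ∧ b.val = 2) ∨ (a.val = 1 ∧ b.val = 2) ∨ (2 ≤ a.val ∧ b.val = a.val + 1) ∨
    (b.val = 0 ∧ a.val = 2) ∨ (b.val = 1 ∧ a.val = 2) ∨ (2 ≤ b.val ∧ a.val = b.val + 1) := by
  rw [tCaterpillar, fromRel_adj]
  constructor
  · rintro ⟨-, h | h⟩ <;> omega
  · intro h
    refine ⟨fun hab => ?_, by omega⟩
    subst hab
    omega

instance (n : ℕ) : DecidableRel (tCaterpillar n).Adj :=
  fun _ _ => decidable_of_iff' _ tCaterpillar_adj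

theorem tCaterpillar_isAcyclic (n : ℕ) : (tCaterpillar n).IsAcyclic := by
  refine isAcyclic_of_rank (fun i => Nat.dist i 2) (fun a b hab => ?_)
    fun a b c hab hac hb hc => Fin.ext ?_ <;>
  simp only [tCaterpillar_adj, Nat.dist] at * <;> omega

def tCaterpillarSuccIso (k : ℕ) :
    tCaterpillar (k + 4) ≃g (tCaterpillar (k + 3)).addPendant (Fin.last (k + 2)) where
  toEquiv := finSuccEquivLast
  map_rel_iff' {a b} := by
    induction a using Fin.lastCases <;> induction b using Fin.lastCases <;>
      simp only [finSuccEquivLast_last, finSuccEquivLast_castSucc, addPendant_adj_some_some,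
        addPendant_adj_none_some, addPendant_adj_some_none, addPendant_not_adj_none_none,
        tCaterpillar_adj, Fin.ext_iff, Fin.val_last, Fin.val_castSucc, false_iff] <;> omega

lemma tCaterpillarSuccIso_last (k : ℕ) : tCaterpillarSuccIso k (Fin.last (k + 3)) = none :=
  finSuccEquivLast_last

lemma ncard_parentMaps_tCaterpillar_three :
    (tCaterpillar 3).parentMaps.ncard = 8 ∧
      ((tCaterpillar 3).parentMapsWithRoot (Fin.last 2)).ncard = 4 := by
  simp only [← Nat.card_coe_set_eq, Nat.card_eq_fintype_card]
  decide

theorem ncard_parentMaps_tCaterpillar (k : ℕ) :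
    (tCaterpillar (k + 3)).parentMaps.ncard = 4 * Nat.fib (2 * k + 3) ∧
      ((tCaterpillar (k + 3)).parentMapsWithRoot (Fin.last (k + 2))).ncard =
        4 * Nat.fib (2 * k + 2) := by
  induction k with
  | zero => exact ncard_parentMaps_tCaterpillar_three
  | succ k ih =>
    have hpendant : (((tCaterpillar (k + 3)).addPendant (Fin.last (k + 2))).parentMapsWithRoot
        none).ncard = 4 * Nat.fib (2 * (k + 1) + 2) := by
      rw [ncard_parentMapsWithRoot_addPendant, ih.1, ih.2,
        show 2 * (k + 1) + 2 = 2 * k + 2 + 2 by ring, Nat.fib_add_two (n := 2 * k + 2)]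
      ring
    refine ⟨?_, ?_⟩
    · rw [(tCaterpillarSuccIso k).ncard_parentMaps, ncard_parentMaps_addPendant, hpendant, ih.1,
        show 2 * (k + 1) + 3 = 2 * k + 3 + 2 by ring, Nat.fib_add_two (n := 2 * k + 3),
        show 2 * (k + 1) + 2 = 2 * k + 3 + 1 by ring]
      ring
    · rwa [(tCaterpillarSuccIso k).ncard_parentMapsWithRoot, tCaterpillarSuccIso_last]

theorem tCaterpillar_forest_count (n : ℕ) (hn : 4 ≤ n) :
    Nat.card (RootedForest (tCaterpillar n)) = 4 * Nat.fib (2 * n - 3) := by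
  obtain ⟨k, rfl⟩ : ∃ k, n = k + 3 := ⟨n - 3, by omega⟩
  rw [Nat.card_congr (tCaterpillar_isAcyclic _).rootedForestEquiv, Nat.card_coe_set_eq,
    (ncard_parentMaps_tCaterpillar k).1, show 2 * (k + 3) - 3 = 2 * k + 3 by omega]
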